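/- Let v, α ∈ ℕ₀, let m, n ∈ ℕ with n ≥ m, and let x, k, z ∈ ℂ. Then the m-th partial derivative with respect to k of the function k ↦ _Tℬ^{(s,v+α)}_{n,μ}(x+k,z;λ) equals (m!/2^v) · Σ_{r=m}^{n} binomial(n,r) · binomial(r,m) · 𝒢^{(v)}_{r−m,μ}(x;λ) · _Tℬ^{(s,α)}_{n−r,μ}(k,z;λ). -/

import Mathlib

/-!
Parametric kinds of generalized Apostol–Bernoulli polynomials (Özat–Çekim–Kızılateş–Qi).
All generating functions are formal power series in `t` over `ℂ`; each polynomial family is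
`n!` times the `n`-th coefficient of its generating series.
-/

open PowerSeries

noncomputable section

/-- The formal power series `t / (λ eᵗ + μ)`. -/
def bker (lam mu : ℂ) : ℂ⟦X⟧ := X * (C lam * exp ℂ + C mu)⁻¹

/-- The formal power series `e^{x t}`. -/
def expS (x : ℂ) : ℂ⟦X⟧ := rescale x (exp ℂ)

/-- The formal power series `cos (z t)`. -/
def cosS (z : ℂ) : ℂ⟦X⟧ := rescale z (cos ℂ)

/-- The formal power series `sin (z t)`. -/
def sinS (z : ℂ) : ℂ⟦X⟧ := rescale z (sin ℂ)

/-- Parametric (cosine) kind of generalized Apostol–Bernoulli polynomials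
`_Tℬ^{(c,v)}_{n,μ}(x,z;λ)`, defined by
`(t/(λeᵗ+μ))^v e^{xt} U(t) cos(zt) = Σ_n _Tℬ^{(c,v)}_{n,μ}(x,z;λ) tⁿ/n!`. -/
def TBc (lam mu : ℂ) (U : ℂ⟦X⟧) (v n : ℕ) (x z : ℂ) : ℂ :=
  n.factorial * coeff n (bker lam mu ^ v * expS x * U * cosS z)

/-- Parametric (sine) kind of generalized Apostol–Bernoulli polynomials
`_Tℬ^{(s,v)}_{n,μ}(x,z;λ)`, defined by
`(t/(λeᵗ+μ))^v e^{xt} U(t) sin(zt) = Σ_n _Tℬ^{(s,v)}_{n,μ}(x,z;λ) tⁿ/n!`. -/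
def TBs (lam mu : ℂ) (U : ℂ⟦X⟧) (v n : ℕ) (x z : ℂ) : ℂ :=
  n.factorial * coeff n (bker lam mu ^ v * expS x * U * sinS z)

/-- `_Tℬ^{(v)}_{n,μ}(x;λ)`, defined by
`(t/(λeᵗ+μ))^v e^{xt} U(t) = Σ_n _Tℬ^{(v)}_{n,μ}(x;λ) tⁿ/n!`. -/
def TB (lam mu : ℂ) (U : ℂ⟦X⟧) (v n : ℕ) (x : ℂ) : ℂ :=
  n.factorial * coeff n (bker lam mu ^ v * expS x * U)

/-- Cosine generalized Apostol–Bernoulli polynomials `ℬ^{(c,v)}_{n,μ}(x,z;λ)`, defined by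
`(t/(λeᵗ+μ))^v e^{xt} cos(zt) = Σ_n ℬ^{(c,v)}_{n,μ}(x,z;λ) tⁿ/n!`. -/
def Bc (lam mu : ℂ) (v n : ℕ) (x z : ℂ) : ℂ :=
  n.factorial * coeff n (bker lam mu ^ v * expS x * cosS z)

/-- Sine generalized Apostol–Bernoulli polynomials `ℬ^{(s,v)}_{n,μ}(x,z;λ)`. -/
def Bs (lam mu : ℂ) (v n : ℕ) (x z : ℂ) : ℂ :=
  n.factorial * coeff n (bker lam mu ^ v * expS x * sinS z)

/-- Generalized Apostol–Bernoulli polynomials of order `v`: `ℬ^{(v)}_{n,μ}(x;λ)`, defined by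
`(t/(λeᵗ+μ))^v e^{xt} = Σ_n ℬ^{(v)}_{n,μ}(x;λ) tⁿ/n!`. -/
def Bpoly (lam mu : ℂ) (v n : ℕ) (x : ℂ) : ℂ :=
  n.factorial * coeff n (bker lam mu ^ v * expS x)

/-- Generalized Apostol–Bernoulli numbers `ℬ^{(v)}_{n,μ}(λ) := ℬ^{(v)}_{n,μ}(0;λ)`. -/
def Bnum (lam mu : ℂ) (v n : ℕ) : ℂ := Bpoly lam mu v n 0

/-- The 2-variable general polynomials `T_n(x)`, defined by `e^{xt} U(t) = Σ_n T_n(x) tⁿ/n!`. -/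
def Tpoly (U : ℂ⟦X⟧) (n : ℕ) (x : ℂ) : ℂ := n.factorial * coeff n (expS x * U)

/-- `U_n := n!` times the `n`-th coefficient of `U`. -/
def Unum (U : ℂ⟦X⟧) (n : ℕ) : ℂ := n.factorial * coeff n U

/-- `C_n(x,y)`, defined by `e^{xt} cos(yt) = Σ_n C_n(x,y) tⁿ/n!`. -/
def Cpoly (n : ℕ) (x y : ℂ) : ℂ := n.factorial * coeff n (expS x * cosS y)

/-- `S_n(x,y)`, defined by `e^{xt} sin(yt) = Σ_n S_n(x,y) tⁿ/n!`. -/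
def Spoly (n : ℕ) (x y : ℂ) : ℂ := n.factorial * coeff n (expS x * sinS y)

/-- Apostol–Bernoulli numbers of order `δ`: `ℬ^{(δ)}_n(Λ)`, defined by
`(t/(Λeᵗ−1))^δ = Σ_n ℬ^{(δ)}_n(Λ) tⁿ/n!`. -/
def ABnum (L : ℂ) (d n : ℕ) : ℂ :=
  n.factorial * coeff n ((X * (C L * exp ℂ - 1)⁻¹) ^ d)

/-- Generalized Apostol–Genocchi polynomials `𝒢^{(v)}_{n,μ}(x;λ)`, defined by
`(2t/(λeᵗ+μ))^v e^{xt} = Σ_n 𝒢^{(v)}_{n,μ}(x;λ) tⁿ/n!`. -/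
def Gpoly (lam mu : ℂ) (v n : ℕ) (x : ℂ) : ℂ :=
  n.factorial * coeff n ((C 2 * X * (C lam * exp ℂ + C mu)⁻¹) ^ v * expS x)

end

/-!
Writing `P = (t/(λeᵗ+μ))^v e^{xt}` and `Q = (t/(λeᵗ+μ))^α U(t) sin(zt)`, the generating series
of `_Tℬ^{(s,v+α)}_{n,μ}(x+k,z;λ)` is `e^{kt} P Q`. For any series `B`, the map
`k ↦ [tⁿ] (e^{kt} B)` has derivative `k ↦ [tⁿ⁻¹] (e^{kt} B)`, because `∂ₖ e^{kt} = t e^{kt}`.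
Hence the `m`-th derivative is `n! [t^{n-m}] (e^{kt} P Q)`; expanding the product
`P · (e^{kt} Q)` and recognising `2^v P` as the Genocchi series gives the formula.
-/

open PowerSeries Finset

lemma coeff_expS (k : ℂ) (i : ℕ) : coeff i (expS k) = k ^ i / i.factorial := by
  simp [expS, coeff_rescale, coeff_exp, div_eq_mul_inv]

lemma expS_add (x k : ℂ) : expS (x + k) = expS x * expS k :=
  (exp_mul_exp_eq_exp_add x k).symm

lemma hasDerivAt_coeff_expS (i : ℕ) (k : ℂ) :
    HasDerivAt (fun k => coeff i (expS k)) (coeff i (X * expS k)) k := by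
  cases i with
  | zero => simpa [coeff_expS] using hasDerivAt_const k (1 : ℂ)
  | succ i =>
    simp only [coeff_expS, coeff_succ_X_mul]
    refine ((hasDerivAt_pow (i + 1) k).div_const ((i + 1).factorial : ℂ)).congr_deriv ?_
    rw [Nat.factorial_succ]
    push_cast
    field_simp

lemma hasDerivAt_coeff_expS_mul (B : ℂ⟦X⟧) (n : ℕ) (k : ℂ) :
    HasDerivAt (fun k => coeff n (expS k * B)) (coeff n (X * expS k * B)) k := by
  simp only [coeff_mul _ _ B]
  exact HasDerivAt.fun_sum fun p _ => (hasDerivAt_coeff_expS p.1 k).mul_const _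

lemma deriv_coeff_succ_expS_mul (B : ℂ⟦X⟧) (n : ℕ) :
    deriv (fun k => coeff (n + 1) (expS k * B)) = fun k => coeff n (expS k * B) := by
  funext k
  rw [(hasDerivAt_coeff_expS_mul B (n + 1) k).deriv, mul_assoc, coeff_succ_X_mul]

lemma iteratedDeriv_coeff_expS_mul (B : ℂ⟦X⟧) {m n : ℕ} (hmn : m ≤ n) :
    iteratedDeriv m (fun k => coeff n (expS k * B)) = fun k => coeff (n - m) (expS k * B) := by
  induction m with
  | zero => simp
  | succ m ih =>
    obtain ⟨j, hj⟩ : ∃ j, n - m = j + 1 := ⟨n - m - 1, by omega⟩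
    rw [iteratedDeriv_succ, ih (by omega), hj, deriv_coeff_succ_expS_mul,
      show n - (m + 1) = j by omega]

lemma coeff_expS_mul_mul (P Q : ℂ⟦X⟧) (k : ℂ) (n : ℕ) :
    coeff n (expS k * (P * Q)) = ∑ j ∈ range (n + 1), coeff j P * coeff (n - j) (expS k * Q) := by
  rw [mul_left_comm, coeff_mul, Nat.sum_antidiagonal_eq_sum_range_succ_mk]

lemma Gpoly_eq_factorial_mul_coeff (lam mu : ℂ) (v s : ℕ) (x : ℂ) :
    Gpoly lam mu v s x = s.factorial * (2 ^ v * coeff s (bker lam mu ^ v * expS x)) := by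
  rw [Gpoly, bker, mul_assoc (C 2), mul_pow, ← map_pow, mul_assoc, coeff_C_mul]

lemma TBs_eq_factorial_mul_coeff_expS_mul (lam mu : ℂ) (U : ℂ⟦X⟧) (v n : ℕ) (k z : ℂ) :
    TBs lam mu U v n k z = n.factorial * coeff n (expS k * (bker lam mu ^ v * U * sinS z)) := by
  rw [TBs]
  ring_nf

lemma choose_mul_choose_mul_factorials {m r n : ℕ} (hmr : m ≤ r) (hrn : r ≤ n) :
    n.choose r * r.choose m * (m.factorial * (r - m).factorial * (n - r).factorial)
      = n.factorial := by
  rw [← Nat.choose_mul_factorial_mul_factorial hrn, ← Nat.choose_mul_factorial_mul_factorial hmr]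
  ring

theorem stmt19_general (lam mu : ℂ) (U : ℂ⟦X⟧)
    (v α : ℕ) (m n : ℕ) (hmn : m ≤ n) (x k z : ℂ) :
    iteratedDeriv m (fun k : ℂ => TBs lam mu U (v + α) n (x + k) z) k
      = (m.factorial : ℂ) / 2 ^ v *
          ∑ r ∈ Finset.Icc m n,
            (n.choose r : ℂ) * (r.choose m : ℂ) * Gpoly lam mu v (r - m) x *
              TBs lam mu U α (n - r) k z := by
  set P := bker lam mu ^ v * expS x
  set Q := bker lam mu ^ α * U * sinS z
  have hTBs : (fun k : ℂ => TBs lam mu U (v + α) n (x + k) z)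
      = fun k => (n.factorial : ℂ) * coeff n (expS k * (P * Q)) := by
    funext k
    rw [TBs, expS_add, pow_add]
    congr 2
    ring
  rw [hTBs, iteratedDeriv_const_mul_field, iteratedDeriv_coeff_expS_mul _ hmn]
  beta_reduce
  rw [coeff_expS_mul_mul, ← Ico_add_one_right_eq_Icc, sum_Ico_eq_sum_range,
    show n + 1 - m = n - m + 1 by omega, mul_sum, mul_sum]
  refine sum_congr rfl fun j hj_mem => ?_
  have hj : j ≤ n - m := Nat.lt_succ_iff.mp (mem_range.mp hj_mem)
  have hfact : (n.choose (m + j) * (m + j).choose m *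
      (m.factorial * j.factorial * (n - m - j).factorial) : ℂ) = n.factorial := by
    have := choose_mul_choose_mul_factorials (Nat.le_add_right m j) (show m + j ≤ n by omega)
    rw [Nat.add_sub_cancel_left, show n - (m + j) = n - m - j by omega] at this
    exact_mod_cast this
  rw [Gpoly_eq_factorial_mul_coeff, TBs_eq_factorial_mul_coeff_expS_mul, Nat.add_sub_cancel_left,
    show n - (m + j) = n - m - j by omega, ← hfact]
  simp only [P, Q]
  field_simp

theorem stmt19 (lam mu : ℂ) (hlm : lam + mu ≠ 0) (U : ℂ⟦X⟧) (hU : PowerSeries.coeff 0 U ≠ 0)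
    (v α : ℕ) (m n : ℕ) (hm : 1 ≤ m) (hmn : m ≤ n) (x k z : ℂ) :
    iteratedDeriv m (fun k : ℂ => TBs lam mu U (v + α) n (x + k) z) k
      = (m.factorial : ℂ) / 2 ^ v *
          ∑ r ∈ Finset.Icc m n,
            (n.choose r : ℂ) * (r.choose m : ℂ) * Gpoly lam mu v (r - m) x *
              TBs lam mu U α (n - r) k z :=
  stmt19_general lam mu U v α m n hmn x k z
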